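/- arXiv:1103.1374 — 2 statements merged into one kernel-verified Lean document; each statement's English description precedes it below -/
import Mathlib

section
/- Let (Ω, 𝓕, P) be a probability space, T > 0, and let L, N, A, X be real-valued stochastic processes indexed by [0,T] such that X_t = x₀ + L_t + N_t − A_t for a constant x₀, where L_t ∈ L¹(P) and N_t ∈ L¹(P) for every t ∈ [0,T], A_0 = 0 almost surely, and the paths of A are almost surely nonnegative and nondecreasing (A_s ≤ A_t a.s. whenever s ≤ t). For n ≥ 1 let t_i = iT/n be the regular partition of [0,T] and write δ_i X = X_{t_i} − X_{t_{i−1}}. Then sqrt( Σ_{i=1}^n (δ_i X)² ) is integrable if and only if A_T ∈ L¹(P). In particular, this integrability holds for some n ≥ 1 if and only if it holds for every n ≥ 1. -/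
/-!
The root of the realized variance is squeezed between the largest increment and the sum of
the absolute increments, so it is integrable exactly when every increment `δᵢX` is. By
telescoping, integrable increments make `X_T - X_0`, hence `A_T - A_0` (a.s. equal to `A_T`),
integrable; conversely `0 = A_0 ≤ A_t ≤ A_T` makes every `A_t`, hence every `X_t`, integrable.
-/

open MeasureTheory Finset

namespace Real

variable {ι : Type*} {s : Finset ι} (f : ι → ℝ)

theorem abs_le_sqrt_sum_sq {j : ι} (hj : j ∈ s) : |f j| ≤ √(∑ i ∈ s, f i ^ 2) := by
  rw [← sqrt_sq_eq_abs]
  exact sqrt_le_sqrt (single_le_sum (fun i _ => sq_nonneg (f i)) hj)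

theorem sqrt_sum_sq_le_sum_abs : √(∑ i ∈ s, f i ^ 2) ≤ ∑ i ∈ s, |f i| := by
  rw [sqrt_le_left (sum_nonneg fun i _ => abs_nonneg _)]
  simpa only [sq_abs] using sum_sq_le_sq_sum_of_nonneg fun i _ => abs_nonneg (f i)

end Real

namespace MeasureTheory

variable {Ω ι : Type*} [MeasurableSpace Ω] {μ : Measure Ω}

theorem integrable_sqrt_sum_sq_iff {s : Finset ι} {f : ι → Ω → ℝ}
    (hf : ∀ i ∈ s, AEStronglyMeasurable (f i) μ) :
    Integrable (fun ω => √(∑ i ∈ s, f i ω ^ 2)) μ ↔ ∀ i ∈ s, Integrable (f i) μ := by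
  refine ⟨fun h i hi => h.mono (hf i hi) (.of_forall fun ω => ?_), fun h => ?_⟩
  · simpa only [Real.norm_eq_abs, abs_of_nonneg (Real.sqrt_nonneg _)]
      using Real.abs_le_sqrt_sum_sq (f · ω) hi
  · refine (integrable_finsetSum s fun i hi => (h i hi).abs).mono'
      (Real.continuous_sqrt.comp_aestronglyMeasurable
        (aestronglyMeasurable_fun_sum s fun i hi => (hf i hi).pow 2)) (.of_forall fun ω => ?_)
    rw [Real.norm_eq_abs, abs_of_nonneg (Real.sqrt_nonneg _)]
    exact Real.sqrt_sum_sq_le_sum_abs (f · ω)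

end MeasureTheory

theorem natCast_mul_div_mem_Icc {T : ℝ} (hT : 0 ≤ T) {i n : ℕ} (hi : i ≤ n) :
    (i : ℝ) * T / n ∈ Set.Icc 0 T :=
  ⟨by positivity, div_le_of_le_mul₀ n.cast_nonneg hT <| by
    rw [mul_comm T]; exact mul_le_mul_of_nonneg_right (Nat.cast_le.2 hi) hT⟩

theorem natCast_add_one_mul_div_mem_Icc {T : ℝ} (hT : 0 ≤ T) {i n : ℕ} (hi : i < n) :
    ((i : ℝ) + 1) * T / n ∈ Set.Icc 0 T := by
  exact_mod_cast natCast_mul_div_mem_Icc hT hi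

theorem sum_range_grid_sub (Y : ℝ → ℝ) (T : ℝ) {n : ℕ} (hn : n ≠ 0) :
    ∑ i ∈ range n, (Y (((i : ℝ) + 1) * T / n) - Y ((i : ℝ) * T / n)) = Y T - Y 0 := by
  have := sum_range_sub (fun i : ℕ => Y ((i : ℝ) * T / n)) n
  simp only [Nat.cast_add, Nat.cast_one, Nat.cast_zero, zero_mul, zero_div] at this
  rwa [mul_div_cancel_left₀ T (Nat.cast_ne_zero.2 hn)] at this

section GridIncrements

variable {Ω : Type*} [MeasurableSpace Ω] {P : Measure Ω} {T : ℝ} {G A X : ℝ → Ω → ℝ}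

theorem integrable_of_integrable_grid_increments {n : ℕ} (hn : n ≠ 0) (hT : 0 ≤ T)
    (hX : ∀ t ∈ Set.Icc 0 T, X t = G t - A t) (hG : ∀ t ∈ Set.Icc 0 T, Integrable (G t) P)
    (hA0 : ∀ᵐ ω ∂P, A 0 ω = 0)
    (h : ∀ i ∈ range n,
      Integrable (fun ω => X (((i : ℝ) + 1) * T / n) ω - X ((i : ℝ) * T / n) ω) P) :
    Integrable (A T) P := by
  have h0 : (0 : ℝ) ∈ Set.Icc 0 T := ⟨le_rfl, hT⟩
  have hT' : T ∈ Set.Icc 0 T := ⟨hT, le_rfl⟩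
  have hXT : Integrable (X T - X 0) P := by
    refine (integrable_finsetSum _ h).congr (.of_forall fun ω => ?_)
    exact sum_range_grid_sub (X · ω) T hn
  have hAT : Integrable (A T - A 0) P := by
    convert ((hG T hT').sub (hG 0 h0)).sub hXT using 1
    rw [hX T hT', hX 0 h0]; abel
  refine hAT.congr ?_
  filter_upwards [hA0] with ω hω
  simp [hω]

theorem integrable_grid_increments_of_integrable (hT : 0 ≤ T)
    (hX : ∀ t ∈ Set.Icc 0 T, X t = G t - A t) (hG : ∀ t ∈ Set.Icc 0 T, Integrable (G t) P)
    (hAmeas : ∀ t ∈ Set.Icc 0 T, AEStronglyMeasurable (A t) P) (hA0 : ∀ᵐ ω ∂P, A 0 ω = 0)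
    (hAmono : ∀ s t : ℝ, 0 ≤ s → s ≤ t → t ≤ T → ∀ᵐ ω ∂P, A s ω ≤ A t ω)
    (hAT : Integrable (A T) P) (n : ℕ) :
    ∀ i ∈ range n,
      Integrable (fun ω => X (((i : ℝ) + 1) * T / n) ω - X ((i : ℝ) * T / n) ω) P := by
  have hXint : ∀ t ∈ Set.Icc 0 T, Integrable (X t) P := by
    intro t ht
    have hA : Integrable (A t) P := by
      refine integrable_of_le_of_le (hAmeas t ht) ?_ (hAmono t T ht.1 ht.2 le_rfl)
        (integrable_zero Ω ℝ P) hAT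
      filter_upwards [hA0, hAmono 0 t le_rfl ht.1 ht.2] with ω h0 hle
      simpa only [Pi.zero_apply, h0] using hle
    exact hX t ht ▸ (hG t ht).sub hA
  intro i hi
  have hi := mem_range.1 hi
  exact (hXint _ (natCast_add_one_mul_div_mem_Icc hT hi)).sub
    (hXint _ (natCast_mul_div_mem_Icc hT hi.le))

end GridIncrements

theorem stmt_3_general {Ω : Type*} [MeasurableSpace Ω] (P : Measure Ω) [IsProbabilityMeasure P]
    (T : ℝ) (hT : 0 < T) (x₀ : ℝ) (L N A X : ℝ → Ω → ℝ)
    (hdecomp : ∀ t ∈ Set.Icc (0 : ℝ) T, ∀ ω, X t ω = x₀ + L t ω + N t ω - A t ω)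
    (hL : ∀ t ∈ Set.Icc (0 : ℝ) T, Integrable (L t) P)
    (hN : ∀ t ∈ Set.Icc (0 : ℝ) T, Integrable (N t) P)
    (hAmeas : ∀ t ∈ Set.Icc (0 : ℝ) T, AEStronglyMeasurable (A t) P)
    (hA0 : ∀ᵐ ω ∂P, A 0 ω = 0)
    (hAmono : ∀ s t : ℝ, 0 ≤ s → s ≤ t → t ≤ T → ∀ᵐ ω ∂P, A s ω ≤ A t ω) :
    (∀ n : ℕ, 1 ≤ n →
      (Integrable (fun ω => Real.sqrt (∑ i ∈ Finset.range n,
          (X (((i : ℝ) + 1) * T / n) ω - X ((i : ℝ) * T / n) ω) ^ 2)) P ↔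
        Integrable (A T) P)) ∧
    ((∃ n : ℕ, 1 ≤ n ∧ Integrable (fun ω => Real.sqrt (∑ i ∈ Finset.range n,
          (X (((i : ℝ) + 1) * T / n) ω - X ((i : ℝ) * T / n) ω) ^ 2)) P) ↔
      (∀ n : ℕ, 1 ≤ n → Integrable (fun ω => Real.sqrt (∑ i ∈ Finset.range n,
          (X (((i : ℝ) + 1) * T / n) ω - X ((i : ℝ) * T / n) ω) ^ 2)) P)) := by
  set G : ℝ → Ω → ℝ := fun t ω => x₀ + L t ω + N t ω
  have hG : ∀ t ∈ Set.Icc 0 T, Integrable (G t) P := fun t ht =>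
    ((integrable_const x₀).add (hL t ht)).add (hN t ht)
  have hX : ∀ t ∈ Set.Icc 0 T, X t = G t - A t := fun t ht => funext (hdecomp t ht)
  have hXmeas : ∀ t ∈ Set.Icc 0 T, AEStronglyMeasurable (X t) P := fun t ht =>
    hX t ht ▸ (hG t ht).1.sub (hAmeas t ht)
  have key : ∀ n : ℕ, 1 ≤ n → (Integrable (fun ω => √(∑ i ∈ range n,
      (X (((i : ℝ) + 1) * T / n) ω - X ((i : ℝ) * T / n) ω) ^ 2)) P ↔ Integrable (A T) P) := by
    intro n hn
    refine (integrable_sqrt_sum_sq_iff fun i hi => ?_).trans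
      ⟨integrable_of_integrable_grid_increments (by omega) hT.le hX hG hA0,
        fun hAT => integrable_grid_increments_of_integrable hT.le hX hG hAmeas hA0 hAmono hAT n⟩
    have hi := mem_range.1 hi
    exact (hXmeas _ (natCast_add_one_mul_div_mem_Icc hT.le hi)).sub
      (hXmeas _ (natCast_mul_div_mem_Icc hT.le hi.le))
  exact ⟨key, fun ⟨n, hn, h⟩ m hm => (key m hm).2 ((key n hn).1 h),
    fun h => ⟨1, le_rfl, h 1 le_rfl⟩⟩

/-- Abstract form of Theorem 2 of the paper: if `X = x₀ + L + N - A` on `[0,T]` with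
`L_t, N_t ∈ L¹`, `A_0 = 0` a.s. and `A` a.s. nonnegative nondecreasing, then for the regular
partition `t_i = iT/n`, the discrete volatility swap payoff `sqrt(∑ i (δ_i X)²)` is integrable
iff `A_T ∈ L¹(P)`; in particular integrability for some `n ≥ 1` is equivalent to integrability
for every `n ≥ 1`. -/
theorem stmt_3 {Ω : Type*} [MeasurableSpace Ω] (P : Measure Ω) [IsProbabilityMeasure P]
    (T : ℝ) (hT : 0 < T) (x₀ : ℝ) (L N A X : ℝ → Ω → ℝ)
    (hdecomp : ∀ t ∈ Set.Icc (0 : ℝ) T, ∀ ω, X t ω = x₀ + L t ω + N t ω - A t ω)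
    (hL : ∀ t ∈ Set.Icc (0 : ℝ) T, Integrable (L t) P)
    (hN : ∀ t ∈ Set.Icc (0 : ℝ) T, Integrable (N t) P)
    (hAmeas : ∀ t ∈ Set.Icc (0 : ℝ) T, AEStronglyMeasurable (A t) P)
    (hA0 : ∀ᵐ ω ∂P, A 0 ω = 0)
    (hAnonneg : ∀ t ∈ Set.Icc (0 : ℝ) T, ∀ᵐ ω ∂P, 0 ≤ A t ω)
    (hAmono : ∀ s t : ℝ, 0 ≤ s → s ≤ t → t ≤ T → ∀ᵐ ω ∂P, A s ω ≤ A t ω) :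
    (∀ n : ℕ, 1 ≤ n →
      (Integrable (fun ω => Real.sqrt (∑ i ∈ Finset.range n,
          (X (((i : ℝ) + 1) * T / n) ω - X ((i : ℝ) * T / n) ω) ^ 2)) P ↔
        Integrable (A T) P)) ∧
    ((∃ n : ℕ, 1 ≤ n ∧ Integrable (fun ω => Real.sqrt (∑ i ∈ Finset.range n,
          (X (((i : ℝ) + 1) * T / n) ω - X ((i : ℝ) * T / n) ω) ^ 2)) P) ↔
      (∀ n : ℕ, 1 ≤ n → Integrable (fun ω => Real.sqrt (∑ i ∈ Finset.range n,
          (X (((i : ℝ) + 1) * T / n) ω - X ((i : ℝ) * T / n) ω) ^ 2)) P)) :=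
  stmt_3_general P T hT x₀ L N A X hdecomp hL hN hAmeas hA0 hAmono
end

section
/- Let (Ω, 𝓕, (𝓕_t)_{t∈[0,T]}, P) be a filtered probability space. Let M and N be martingales with M_t, N_t ∈ L²(P) for all t ∈ [0,T] and with orthogonal increments in the sense that E[(M_t − M_s)(N_t − N_s)] = 0 for all 0 ≤ s ≤ t ≤ T. Let A be an adapted process with A_0 = 0 a.s., almost surely nondecreasing nonnegative paths, and A_T ∈ L²(P). Set X_t = x₀ + M_t + N_t − A_t for a constant x₀. Then for every n ≥ 1, with the regular partition t_i = iT/n and δ_i X = X_{t_i} − X_{t_{i−1}}: | E(Σ_{i=1}^n (δ_i X)²) − ( E((M_T − M_0)²) + E((N_T − N_0)²) ) | ≤ C, where C = E(A_T²) + 2·sqrt(E((M_T − M_0)²))·sqrt(E(A_T²)) + 2·sqrt(E((N_T − N_0)²))·sqrt(E(A_T²)) is a finite constant independent of n. -/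
/-
Write `δᵢX = Dᵢ - aᵢ` with `Dᵢ = δᵢM + δᵢN` and `aᵢ = δᵢA ≥ 0`. Increments of a martingale over
disjoint intervals are orthogonal in `L²`, and `δᵢM ⊥ δᵢN` by hypothesis, so for every partition
`E ∑ Dᵢ² = E (M_T - M_0)² + E (N_T - N_0)²`. The remainder `∑ aᵢ² - 2 ∑ Dᵢ aᵢ` is bounded
pathwise by `A_T² + 2 (∑ Dᵢ²)^{1/2} A_T`, by Cauchy–Schwarz and `∑ aᵢ² ≤ (∑ aᵢ)² = A_T²`, and
Cauchy–Schwarz in `L²` turns the expectation of this bound into the constant.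
-/

open MeasureTheory Finset

theorem Finset.abs_sum_sub_sq_sub_sum_sq_le {ι : Type*} (s : Finset ι) (d a : ι → ℝ)
    (ha : ∀ i ∈ s, 0 ≤ a i) :
    |∑ i ∈ s, (d i - a i) ^ 2 - ∑ i ∈ s, d i ^ 2|
      ≤ (∑ i ∈ s, a i) ^ 2 + 2 * (√(∑ i ∈ s, d i ^ 2) * ∑ i ∈ s, a i) := by
  have hexpand : ∑ i ∈ s, (d i - a i) ^ 2 - ∑ i ∈ s, d i ^ 2
      = ∑ i ∈ s, a i ^ 2 - 2 * ∑ i ∈ s, d i * a i := by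
    simp only [sub_sq, sum_add_distrib, sum_sub_distrib, mul_sum, mul_assoc]
    ring
  have hsq_nonneg : 0 ≤ ∑ i ∈ s, a i ^ 2 := sum_nonneg fun i _ => sq_nonneg _
  have hsq : ∑ i ∈ s, a i ^ 2 ≤ (∑ i ∈ s, a i) ^ 2 := sum_sq_le_sq_sum_of_nonneg ha
  have hcross : |∑ i ∈ s, d i * a i| ≤ √(∑ i ∈ s, d i ^ 2) * ∑ i ∈ s, a i :=
    calc |∑ i ∈ s, d i * a i| ≤ √((∑ i ∈ s, d i ^ 2) * ∑ i ∈ s, a i ^ 2) :=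
          Real.abs_le_sqrt (sum_mul_sq_le_sq_mul_sq s d a)
      _ = √(∑ i ∈ s, d i ^ 2) * √(∑ i ∈ s, a i ^ 2) :=
          Real.sqrt_mul (sum_nonneg fun i _ => sq_nonneg _) _
      _ ≤ √(∑ i ∈ s, d i ^ 2) * ∑ i ∈ s, a i :=
          mul_le_mul_of_nonneg_left (Real.sqrt_le_iff.2 ⟨sum_nonneg ha, hsq⟩) (Real.sqrt_nonneg _)
  rw [hexpand, abs_le]
  constructor <;> linarith [abs_le.1 hcross]

theorem Real.sqrt_add_le_add_sqrt {x y : ℝ} (hx : 0 ≤ x) (hy : 0 ≤ y) : √(x + y) ≤ √x + √y :=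
  Real.sqrt_le_iff.2 ⟨by positivity, by
    nlinarith [Real.sq_sqrt hx, Real.sq_sqrt hy, Real.sqrt_nonneg x, Real.sqrt_nonneg y]⟩

namespace MeasureTheory

variable {Ω : Type*} {m0 : MeasurableSpace Ω} {P : Measure Ω} {f g : Ω → ℝ}

theorem integral_mul_le_sqrt_mul_sqrt (hf : MemLp f 2 P) (hg : MemLp g 2 P) :
    ∫ ω, f ω * g ω ∂P ≤ √(∫ ω, f ω ^ 2 ∂P) * √(∫ ω, g ω ^ 2 ∂P) := by
  have inner_toLp : ∀ {u v : Ω → ℝ} (hu : MemLp u 2 P) (hv : MemLp v 2 P),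
      inner ℝ (hu.toLp u) (hv.toLp v) = ∫ ω, u ω * v ω ∂P := by
    intro u v hu hv
    rw [L2.inner_def]
    refine integral_congr_ae ?_
    filter_upwards [hu.coeFn_toLp, hv.coeFn_toLp] with ω hu' hv'
    simp [hu', hv', mul_comm]
  simp only [sq]
  rw [← inner_toLp hf hg, ← inner_toLp hf hf, ← inner_toLp hg hg,
    real_inner_self_eq_norm_mul_norm, real_inner_self_eq_norm_mul_norm,
    Real.sqrt_mul_self (norm_nonneg _), Real.sqrt_mul_self (norm_nonneg _)]
  exact real_inner_le_norm _ _

theorem integral_add_sq_of_integral_mul_eq_zero (hf : MemLp f 2 P) (hg : MemLp g 2 P)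
    (horth : ∫ ω, f ω * g ω ∂P = 0) :
    ∫ ω, (f ω + g ω) ^ 2 ∂P = ∫ ω, f ω ^ 2 ∂P + ∫ ω, g ω ^ 2 ∂P := by
  have hfg : Integrable (fun ω => 2 * (f ω * g ω)) P := (hf.integrable_mul hg).const_mul 2
  have hf_fg : Integrable (fun ω => f ω ^ 2 + 2 * (f ω * g ω)) P := hf.integrable_sq.add hfg
  calc ∫ ω, (f ω + g ω) ^ 2 ∂P
      = ∫ ω, f ω ^ 2 + 2 * (f ω * g ω) ∂P + ∫ ω, g ω ^ 2 ∂P := by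
        rw [← integral_add hf_fg hg.integrable_sq]
        congr with ω; ring
    _ = ∫ ω, f ω ^ 2 ∂P + ∫ ω, g ω ^ 2 ∂P := by
        rw [integral_add hf.integrable_sq hfg, integral_const_mul, horth, mul_zero, add_zero]

theorem integral_sq_sum_of_integral_mul_eq_zero {ι : Type*} {s : Finset ι} {f : ι → Ω → ℝ}
    (hf : ∀ i ∈ s, MemLp (f i) 2 P)
    (horth : ∀ i ∈ s, ∀ j ∈ s, i ≠ j → ∫ ω, f i ω * f j ω ∂P = 0) :
    ∫ ω, (∑ i ∈ s, f i ω) ^ 2 ∂P = ∑ i ∈ s, ∫ ω, f i ω ^ 2 ∂P := by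
  have hint : ∀ i ∈ s, ∀ j ∈ s, Integrable (fun ω => f i ω * f j ω) P :=
    fun i hi j hj => (hf i hi).integrable_mul (hf j hj)
  simp_rw [sq, sum_mul_sum]
  rw [integral_finsetSum _ fun i hi => integrable_finsetSum _ (hint i hi)]
  refine sum_congr rfl fun i hi => ?_
  rw [integral_finsetSum _ (hint i hi),
    sum_eq_single_of_mem i hi fun j hj hji => horth i hi j hj hji.symm]

theorem abs_integral_sum_sub_sq_sub_integral_sum_sq_le {ι : Type*} {s : Finset ι}
    {D a : ι → Ω → ℝ} {S : Ω → ℝ} (hD : ∀ i ∈ s, MemLp (D i) 2 P)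
    (ha : ∀ i ∈ s, MemLp (a i) 2 P) (hS : MemLp S 2 P)
    (ha_nonneg : ∀ᵐ ω ∂P, ∀ i ∈ s, 0 ≤ a i ω) (ha_sum : ∀ᵐ ω ∂P, ∑ i ∈ s, a i ω = S ω) :
    |∫ ω, ∑ i ∈ s, (D i ω - a i ω) ^ 2 ∂P - ∫ ω, ∑ i ∈ s, D i ω ^ 2 ∂P|
      ≤ ∫ ω, S ω ^ 2 ∂P + 2 * √(∫ ω, ∑ i ∈ s, D i ω ^ 2 ∂P) * √(∫ ω, S ω ^ 2 ∂P) := by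
  set G : Ω → ℝ := fun ω => √(∑ i ∈ s, D i ω ^ 2)
  have hG_sq : ∀ ω, G ω ^ 2 = ∑ i ∈ s, D i ω ^ 2 := fun ω =>
    Real.sq_sqrt (sum_nonneg fun i _ => sq_nonneg _)
  have hD_sq : Integrable (fun ω => ∑ i ∈ s, D i ω ^ 2) P :=
    integrable_finsetSum _ fun i hi => (hD i hi).integrable_sq
  have hG : MemLp G 2 P := by
    rw [memLp_two_iff_integrable_sq
      (Real.continuous_sqrt.comp_aestronglyMeasurable hD_sq.aestronglyMeasurable)]
    exact hD_sq.congr (ae_of_all _ fun ω => (hG_sq ω).symm)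
  have hDa_sq : Integrable (fun ω => ∑ i ∈ s, (D i ω - a i ω) ^ 2) P :=
    integrable_finsetSum _ fun i hi => ((hD i hi).sub (ha i hi)).integrable_sq
  have hbound : ∀ᵐ ω ∂P, ‖∑ i ∈ s, (D i ω - a i ω) ^ 2 - ∑ i ∈ s, D i ω ^ 2‖
      ≤ S ω ^ 2 + 2 * (G ω * S ω) := by
    filter_upwards [ha_nonneg, ha_sum] with ω hnonneg hsum
    rw [Real.norm_eq_abs, ← hsum]
    exact s.abs_sum_sub_sq_sub_sum_sq_le (D · ω) (a · ω) hnonneg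
  have hGS : Integrable (fun ω => 2 * (G ω * S ω)) P := (hG.integrable_mul hS).const_mul 2
  calc |∫ ω, ∑ i ∈ s, (D i ω - a i ω) ^ 2 ∂P - ∫ ω, ∑ i ∈ s, D i ω ^ 2 ∂P|
      = ‖∫ ω, ∑ i ∈ s, (D i ω - a i ω) ^ 2 - ∑ i ∈ s, D i ω ^ 2 ∂P‖ := by
        rw [integral_sub hDa_sq hD_sq, Real.norm_eq_abs]
    _ ≤ ∫ ω, S ω ^ 2 + 2 * (G ω * S ω) ∂P :=
        norm_integral_le_of_norm_le (hS.integrable_sq.add hGS) hbound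
    _ = ∫ ω, S ω ^ 2 ∂P + 2 * ∫ ω, G ω * S ω ∂P := by
        rw [integral_add hS.integrable_sq hGS, integral_const_mul]
    _ ≤ ∫ ω, S ω ^ 2 ∂P + 2 * (√(∫ ω, G ω ^ 2 ∂P) * √(∫ ω, S ω ^ 2 ∂P)) := by
        gcongr
        exact integral_mul_le_sqrt_mul_sqrt hG hS
    _ = ∫ ω, S ω ^ 2 ∂P + 2 * √(∫ ω, ∑ i ∈ s, D i ω ^ 2 ∂P) * √(∫ ω, S ω ^ 2 ∂P) := by
        simp only [hG_sq, mul_assoc]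

end MeasureTheory

namespace MeasureTheory.Martingale

variable {Ω ι : Type*} [Preorder ι] {m0 : MeasurableSpace Ω} {P : Measure Ω} [IsFiniteMeasure P]
  {ℱ : Filtration ι m0} {M : ι → Ω → ℝ}

theorem integral_mul_sub_eq_zero (hM : Martingale M ℱ P) {s t : ι} (hst : s ≤ t)
    {g : Ω → ℝ} (hg : StronglyMeasurable[ℱ s] g) (hint : Integrable (g * (M t - M s)) P) :
    ∫ ω, g ω * (M t ω - M s ω) ∂P = 0 := by
  have hincrement : P[M t - M s|ℱ s] =ᵐ[P] 0 := by
    have hMs : P[M s|ℱ s] = M s :=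
      condExp_of_stronglyMeasurable (ℱ.le s) (hM.stronglyAdapted s) (hM.integrable s)
    filter_upwards [condExp_sub (hM.integrable t) (hM.integrable s) (ℱ s),
      hM.condExp_ae_eq hst] with ω hsub hMt
    simp [hsub, hMt, hMs]
  calc ∫ ω, g ω * (M t ω - M s ω) ∂P = ∫ ω, P[g * (M t - M s)|ℱ s] ω ∂P :=
        (integral_condExp (ℱ.le s)).symm
    _ = 0 := by
        rw [integral_congr_ae ((condExp_mul_of_stronglyMeasurable_left hg hint
          ((hM.integrable t).sub (hM.integrable s))).trans
          (hincrement.mono fun ω h => by simp [h]) : _ =ᵐ[P] (0 : Ω → ℝ))]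
        simp

theorem integral_sq_sub_eq_sum (hM : Martingale M ℱ P) {u : ℕ → ι} (hu : Monotone u)
    {n : ℕ} (hL2 : ∀ i ≤ n, MemLp (M (u i)) 2 P) :
    ∫ ω, (M (u n) ω - M (u 0) ω) ^ 2 ∂P
      = ∑ i ∈ range n, ∫ ω, (M (u (i + 1)) ω - M (u i) ω) ^ 2 ∂P := by
  have hincL2 : ∀ i ∈ range n, MemLp (M (u (i + 1)) - M (u i)) 2 P := fun i hi =>
    (hL2 _ (mem_range.1 hi)).sub (hL2 _ (mem_range.1 hi).le)
  have horth : ∀ i j, i < j → j < n →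
      ∫ ω, (M (u (i + 1)) ω - M (u i) ω) * (M (u (j + 1)) ω - M (u j) ω) ∂P = 0 := by
    intro i j hij hjn
    have hmeas : StronglyMeasurable[ℱ (u j)] (M (u (i + 1)) - M (u i)) :=
      ((hM.stronglyAdapted _).sub ((hM.stronglyAdapted _).mono (ℱ.mono (hu i.le_succ)))).mono
        (ℱ.mono (hu hij))
    exact hM.integral_mul_sub_eq_zero (hu j.le_succ) hmeas
      ((hincL2 i (mem_range.2 (hij.trans hjn))).integrable_mul (hincL2 j (mem_range.2 hjn)))
  have htelescope : ∀ ω, M (u n) ω - M (u 0) ω = ∑ i ∈ range n, (M (u (i + 1)) ω - M (u i) ω) :=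
    fun ω => (sum_range_sub (fun i => M (u i) ω) n).symm
  simp_rw [htelescope]
  refine integral_sq_sum_of_integral_mul_eq_zero (f := fun i => M (u (i + 1)) - M (u i)) hincL2
    fun i hi j hj hij => ?_
  rcases hij.lt_or_gt with hlt | hgt
  · exact horth i j hlt (mem_range.1 hj)
  · simpa only [Pi.sub_apply, mul_comm] using horth j i hgt (mem_range.1 hi)

theorem integral_sum_sq_add_increments {N : ι → Ω → ℝ} (hM : Martingale M ℱ P)
    (hN : Martingale N ℱ P) {u : ℕ → ι} (hu : Monotone u) {n : ℕ}
    (hM2 : ∀ i ≤ n, MemLp (M (u i)) 2 P) (hN2 : ∀ i ≤ n, MemLp (N (u i)) 2 P)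
    (horth : ∀ i < n,
      ∫ ω, (M (u (i + 1)) ω - M (u i) ω) * (N (u (i + 1)) ω - N (u i) ω) ∂P = 0) :
    ∫ ω, ∑ i ∈ range n, (M (u (i + 1)) ω - M (u i) ω + (N (u (i + 1)) ω - N (u i) ω)) ^ 2 ∂P
      = ∫ ω, (M (u n) ω - M (u 0) ω) ^ 2 ∂P + ∫ ω, (N (u n) ω - N (u 0) ω) ^ 2 ∂P := by
  have hMinc : ∀ i < n, MemLp (M (u (i + 1)) - M (u i)) 2 P := fun i hi =>
    (hM2 _ hi).sub (hM2 _ hi.le)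
  have hNinc : ∀ i < n, MemLp (N (u (i + 1)) - N (u i)) 2 P := fun i hi =>
    (hN2 _ hi).sub (hN2 _ hi.le)
  have hinc : ∀ i < n, MemLp (fun ω => M (u (i + 1)) ω - M (u i) ω + (N (u (i + 1)) ω - N (u i) ω))
      2 P := fun i hi => (hMinc i hi).add (hNinc i hi)
  rw [integral_finsetSum _ fun i hi => (hinc i (mem_range.1 hi)).integrable_sq,
    hM.integral_sq_sub_eq_sum hu hM2, hN.integral_sq_sub_eq_sum hu hN2, ← sum_add_distrib]
  exact sum_congr rfl fun i hi => integral_add_sq_of_integral_mul_eq_zero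
    (hMinc i (mem_range.1 hi)) (hNinc i (mem_range.1 hi)) (horth i (mem_range.1 hi))

end MeasureTheory.Martingale

theorem abs_integral_sum_sq_increments_sub_le {Ω : Type*} {m0 : MeasurableSpace Ω}
    {P : Measure Ω} [IsFiniteMeasure P] {T : ℝ} {ℱ : Filtration ℝ m0} {x₀ : ℝ}
    {M N A X : ℝ → Ω → ℝ} (hM : Martingale M ℱ P) (hN : Martingale N ℱ P)
    (hM2 : ∀ t ∈ Set.Icc (0 : ℝ) T, MemLp (M t) 2 P)
    (hN2 : ∀ t ∈ Set.Icc (0 : ℝ) T, MemLp (N t) 2 P)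
    (horth : ∀ s t : ℝ, 0 ≤ s → s ≤ t → t ≤ T →
      ∫ ω, (M t ω - M s ω) * (N t ω - N s ω) ∂P = 0)
    (hAadapted : Adapted ℱ A) (hA0 : ∀ᵐ ω ∂P, A 0 ω = 0)
    (hAmono : ∀ᵐ ω ∂P, ∀ s t : ℝ, 0 ≤ s → s ≤ t → t ≤ T → A s ω ≤ A t ω)
    (hAT : MemLp (A T) 2 P) (hX : ∀ t ω, X t ω = x₀ + M t ω + N t ω - A t ω)
    {u : ℕ → ℝ} {n : ℕ} (hu : Monotone u) (hu0 : u 0 = 0) (hun : u n = T) :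
    |∫ ω, ∑ i ∈ range n, (X (u (i + 1)) ω - X (u i) ω) ^ 2 ∂P
        - (∫ ω, (M T ω - M 0 ω) ^ 2 ∂P + ∫ ω, (N T ω - N 0 ω) ^ 2 ∂P)|
      ≤ ∫ ω, A T ω ^ 2 ∂P
        + 2 * √(∫ ω, (M T ω - M 0 ω) ^ 2 ∂P) * √(∫ ω, A T ω ^ 2 ∂P)
        + 2 * √(∫ ω, (N T ω - N 0 ω) ^ 2 ∂P) * √(∫ ω, A T ω ^ 2 ∂P) := by
  have hu_mem : ∀ i ≤ n, u i ∈ Set.Icc 0 T := fun i hi =>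
    ⟨hu0 ▸ hu (Nat.zero_le i), hun ▸ hu hi⟩
  have hMu : ∀ i ≤ n, MemLp (M (u i)) 2 P := fun i hi => hM2 _ (hu_mem i hi)
  have hNu : ∀ i ≤ n, MemLp (N (u i)) 2 P := fun i hi => hN2 _ (hu_mem i hi)
  have hAu : ∀ i ≤ n, MemLp (A (u i)) 2 P := fun i hi => by
    refine hAT.of_le ((hAadapted _).mono (ℱ.le _) le_rfl).aestronglyMeasurable ?_
    filter_upwards [hAmono, hA0] with ω hmono h0
    have hle : A (u i) ω ≤ A T ω := hmono _ _ (hu_mem i hi).1 (hu_mem i hi).2 le_rfl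
    have hnonneg : 0 ≤ A (u i) ω := h0 ▸ hmono 0 (u i) le_rfl (hu_mem i hi).1 (hu_mem i hi).2
    rwa [Real.norm_of_nonneg hnonneg, Real.norm_of_nonneg (hnonneg.trans hle)]
  have hA_incr_nonneg : ∀ᵐ ω ∂P, ∀ i ∈ range n, 0 ≤ A (u (i + 1)) ω - A (u i) ω := by
    filter_upwards [hAmono] with ω hmono i hi
    have hi' := mem_range.1 hi
    exact sub_nonneg.2 (hmono _ _ (hu_mem i hi'.le).1 (hu i.le_succ) (hu_mem _ hi').2)
  have hA_sum : ∀ᵐ ω ∂P, ∑ i ∈ range n, (A (u (i + 1)) ω - A (u i) ω) = A T ω := by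
    filter_upwards [hA0] with ω h0
    rw [sum_range_sub (fun i => A (u i) ω), hun, hu0, h0, sub_zero]
  have hbound := abs_integral_sum_sub_sq_sub_integral_sum_sq_le
    (D := fun i ω => M (u (i + 1)) ω - M (u i) ω + (N (u (i + 1)) ω - N (u i) ω))
    (a := fun i ω => A (u (i + 1)) ω - A (u i) ω)
    (fun i hi => ((hMu _ (mem_range.1 hi)).sub (hMu i (mem_range.1 hi).le)).add
      ((hNu _ (mem_range.1 hi)).sub (hNu i (mem_range.1 hi).le)))
    (fun i hi => (hAu _ (mem_range.1 hi)).sub (hAu i (mem_range.1 hi).le)) hAT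
    hA_incr_nonneg hA_sum
  beta_reduce at hbound
  rw [hM.integral_sum_sq_add_increments hN hu hMu hNu fun i hi =>
    horth _ _ (hu_mem i hi.le).1 (hu i.le_succ) (hu_mem _ hi).2, hun, hu0] at hbound
  have hX_incr : ∀ i ω, X (u (i + 1)) ω - X (u i) ω
      = M (u (i + 1)) ω - M (u i) ω + (N (u (i + 1)) ω - N (u i) ω)
        - (A (u (i + 1)) ω - A (u i) ω) := fun i ω => by
    rw [hX, hX]; ring
  simp_rw [hX_incr]
  refine hbound.trans ?_
  have hsqrt := Real.sqrt_add_le_add_sqrt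
    (integral_nonneg (μ := P) fun ω => sq_nonneg (M T ω - M 0 ω))
    (integral_nonneg (μ := P) fun ω => sq_nonneg (N T ω - N 0 ω))
  linarith [mul_le_mul_of_nonneg_right hsqrt (Real.sqrt_nonneg (∫ ω, A T ω ^ 2 ∂P))]

theorem stmt_6_general {Ω : Type*} {m0 : MeasurableSpace Ω} (P : Measure Ω) [IsProbabilityMeasure P]
    (T : ℝ) (hT : 0 < T) (ℱ : Filtration ℝ m0) (x₀ : ℝ)
    (M N : ℝ → Ω → ℝ) (hM : Martingale M ℱ P) (hN : Martingale N ℱ P)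
    (hM2 : ∀ t ∈ Set.Icc (0 : ℝ) T, MemLp (M t) 2 P)
    (hN2 : ∀ t ∈ Set.Icc (0 : ℝ) T, MemLp (N t) 2 P)
    (horth : ∀ s t : ℝ, 0 ≤ s → s ≤ t → t ≤ T →
      ∫ ω, (M t ω - M s ω) * (N t ω - N s ω) ∂P = 0)
    (A : ℝ → Ω → ℝ) (hAadapted : Adapted ℱ A)
    (hA0 : ∀ᵐ ω ∂P, A 0 ω = 0)
    (hAmono : ∀ᵐ ω ∂P, ∀ s t : ℝ, 0 ≤ s → s ≤ t → t ≤ T → A s ω ≤ A t ω)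
    (hAT : MemLp (A T) 2 P)
    (X : ℝ → Ω → ℝ) (hX : ∀ t ω, X t ω = x₀ + M t ω + N t ω - A t ω) :
    ∀ n : ℕ, 1 ≤ n →
      |(∫ ω, ∑ i ∈ Finset.range n,
          (X (((i : ℝ) + 1) * T / n) ω - X ((i : ℝ) * T / n) ω) ^ 2 ∂P) -
        ((∫ ω, (M T ω - M 0 ω) ^ 2 ∂P) + ∫ ω, (N T ω - N 0 ω) ^ 2 ∂P)|
      ≤ (∫ ω, (A T ω) ^ 2 ∂P)
        + 2 * Real.sqrt (∫ ω, (M T ω - M 0 ω) ^ 2 ∂P) * Real.sqrt (∫ ω, (A T ω) ^ 2 ∂P)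
        + 2 * Real.sqrt (∫ ω, (N T ω - N 0 ω) ^ 2 ∂P) * Real.sqrt (∫ ω, (A T ω) ^ 2 ∂P) := by
  intro n hn
  set u : ℕ → ℝ := fun i => i * T / n
  have hu : Monotone u := fun i j hij => by dsimp only [u]; gcongr
  have hu_succ : ∀ i : ℕ, ((i : ℝ) + 1) * T / n = u (i + 1) := by simp [u]
  simp_rw [hu_succ]
  exact abs_integral_sum_sq_increments_sub_le hM hN hM2 hN2 horth hAadapted hA0 hAmono hAT hX hu
    (by simp [u]) (mul_div_cancel_left₀ T (by positivity))

/-- Abstract form of Theorem 3 of the paper: if `X = x₀ + M + N - A` with `M, N` orthogonal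
square-integrable martingales, `A` adapted with `A_0 = 0`, a.s. nonnegative nondecreasing paths
and `A_T ∈ L²`, then for every `n ≥ 1` (regular partition `t_i = iT/n`) the discrete variance
swap value `E(∑ (δ_i X)²)` differs from `E((M_T - M_0)²) + E((N_T - N_0)²)` by at most the
constant `C = E(A_T²) + 2·sqrt(E((M_T-M_0)²))·sqrt(E(A_T²)) + 2·sqrt(E((N_T-N_0)²))·sqrt(E(A_T²))`,
independent of `n`. -/
theorem stmt_6 {Ω : Type*} {m0 : MeasurableSpace Ω} (P : Measure Ω) [IsProbabilityMeasure P]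
    (T : ℝ) (hT : 0 < T) (ℱ : Filtration ℝ m0) (x₀ : ℝ)
    (M N : ℝ → Ω → ℝ) (hM : Martingale M ℱ P) (hN : Martingale N ℱ P)
    (hM2 : ∀ t ∈ Set.Icc (0 : ℝ) T, MemLp (M t) 2 P)
    (hN2 : ∀ t ∈ Set.Icc (0 : ℝ) T, MemLp (N t) 2 P)
    (horth : ∀ s t : ℝ, 0 ≤ s → s ≤ t → t ≤ T →
      ∫ ω, (M t ω - M s ω) * (N t ω - N s ω) ∂P = 0)
    (A : ℝ → Ω → ℝ) (hAadapted : Adapted ℱ A)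
    (hA0 : ∀ᵐ ω ∂P, A 0 ω = 0)
    (hAmono : ∀ᵐ ω ∂P, ∀ s t : ℝ, 0 ≤ s → s ≤ t → t ≤ T → A s ω ≤ A t ω)
    (hAnonneg : ∀ᵐ ω ∂P, ∀ t ∈ Set.Icc (0 : ℝ) T, 0 ≤ A t ω)
    (hAT : MemLp (A T) 2 P)
    (X : ℝ → Ω → ℝ) (hX : ∀ t ω, X t ω = x₀ + M t ω + N t ω - A t ω) :
    ∀ n : ℕ, 1 ≤ n →
      |(∫ ω, ∑ i ∈ Finset.range n,
          (X (((i : ℝ) + 1) * T / n) ω - X ((i : ℝ) * T / n) ω) ^ 2 ∂P) -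
        ((∫ ω, (M T ω - M 0 ω) ^ 2 ∂P) + ∫ ω, (N T ω - N 0 ω) ^ 2 ∂P)|
      ≤ (∫ ω, (A T ω) ^ 2 ∂P)
        + 2 * Real.sqrt (∫ ω, (M T ω - M 0 ω) ^ 2 ∂P) * Real.sqrt (∫ ω, (A T ω) ^ 2 ∂P)
        + 2 * Real.sqrt (∫ ω, (N T ω - N 0 ω) ^ 2 ∂P) * Real.sqrt (∫ ω, (A T ω) ^ 2 ∂P) :=
  stmt_6_general P T hT ℱ x₀ M N hM hN hM2 hN2 horth A hAadapted hA0 hAmono hAT X hX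
end
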